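/- arXiv:2411.02139 — 3 statements merged into one kernel-verified Lean document; each statement's English description precedes it below -/
import Mathlib

section
/- Let A₁,…,A_m be n×n symmetric PSD matrices and B₁,…,B_m be k×k symmetric PSD matrices. Then λ_min(∑_{i=1}^m A_i ⊗ B_i) ≥ (min_{1≤j≤m} λ_min(A_j)) · λ_min(∑_{i=1}^m B_i). -/
/-!
In the Loewner order, `a • 1 ≤ Aᵢ` for `a` the least eigenvalue of all the `Aᵢ`, and
`b • 1 ≤ ∑ Bᵢ` for `b = λ_min (∑ Bᵢ)`. Kronecker multiplication by a positive semidefinite matrix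
is monotone, so `∑ Aᵢ ⊗ Bᵢ ≥ ∑ (a • 1) ⊗ Bᵢ = (a • 1) ⊗ ∑ Bᵢ ≥ (a • 1) ⊗ (b • 1) = (a * b) • 1`,
where the second inequality uses `a ≥ 0`.
-/

open Matrix Kronecker
open scoped MatrixOrder ComplexOrder

namespace Matrix

theorem kronecker_sum {R ι l m n p : Type*} [NonUnitalNonAssocSemiring R] (A : Matrix l m R)
    (s : Finset ι) (B : ι → Matrix n p R) : A ⊗ₖ ∑ i ∈ s, B i = ∑ i ∈ s, A ⊗ₖ B i := by
  ext
  simp [sum_apply, Finset.mul_sum]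

section Loewner

variable {𝕜 : Type*} [RCLike 𝕜] {n p : Type*} [Fintype n] [Fintype p]

theorem IsHermitian.smul_one_le_iff_le_eigenvalues [DecidableEq n] {M : Matrix n n 𝕜}
    (hM : M.IsHermitian) {c : ℝ} : c • (1 : Matrix n n 𝕜) ≤ M ↔ ∀ i, c ≤ hM.eigenvalues i := by
  rw [← Algebra.algebraMap_eq_smul_one, algebraMap_le_iff_le_spectrum hM.isSelfAdjoint,
    hM.spectrum_real_eq_range_eigenvalues, Set.forall_mem_range]

theorem kronecker_le_kronecker_left {P P' : Matrix n n 𝕜} {Q : Matrix p p 𝕜} (hP : P ≤ P')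
    (hQ : Q.PosSemidef) : P ⊗ₖ Q ≤ P' ⊗ₖ Q := by
  have h : P' ⊗ₖ Q - P ⊗ₖ Q = (P' - P) ⊗ₖ Q := by
    rw [sub_eq_iff_eq_add, ← add_kronecker, sub_add_cancel]
  rw [le_iff, h]
  exact hP.kronecker hQ

theorem kronecker_le_kronecker_right {P : Matrix n n 𝕜} {Q Q' : Matrix p p 𝕜} (hP : P.PosSemidef)
    (hQ : Q ≤ Q') : P ⊗ₖ Q ≤ P ⊗ₖ Q' := by
  have h : P ⊗ₖ Q' - P ⊗ₖ Q = P ⊗ₖ (Q' - Q) := by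
    rw [sub_eq_iff_eq_add, ← kronecker_add, sub_add_cancel]
  rw [le_iff, h]
  exact hP.kronecker hQ

theorem mul_smul_one_le_sum_kronecker [DecidableEq n] [DecidableEq p] {ι : Type*} (s : Finset ι)
    {A : ι → Matrix n n 𝕜} {B : ι → Matrix p p 𝕜} {a b : ℝ} (ha : 0 ≤ a)
    (hA : ∀ i ∈ s, a • 1 ≤ A i) (hB : ∀ i ∈ s, (B i).PosSemidef) (hb : b • 1 ≤ ∑ i ∈ s, B i) :
    (a * b) • 1 ≤ ∑ i ∈ s, A i ⊗ₖ B i :=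
  calc (a * b) • (1 : Matrix (n × p) (n × p) 𝕜)
      = (a • 1 : Matrix n n 𝕜) ⊗ₖ (b • 1 : Matrix p p 𝕜) := by
        rw [smul_kronecker, kronecker_smul, one_kronecker_one, smul_smul]
    _ ≤ (a • 1 : Matrix n n 𝕜) ⊗ₖ ∑ i ∈ s, B i :=
        kronecker_le_kronecker_right (PosSemidef.one.smul ha) hb
    _ = ∑ i ∈ s, (a • 1 : Matrix n n 𝕜) ⊗ₖ B i := kronecker_sum _ _ _
    _ ≤ ∑ i ∈ s, A i ⊗ₖ B i :=
        Finset.sum_le_sum fun i hi => kronecker_le_kronecker_left (hA i hi) (hB i hi)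

end Loewner

end Matrix

/-- Lower bound on the smallest eigenvalue of a sum of Kronecker products of PSD matrices. -/
theorem stmt_2 {m n k : ℕ} (A : Fin m → Matrix (Fin n) (Fin n) ℝ)
    (B : Fin m → Matrix (Fin k) (Fin k) ℝ)
    (hA : ∀ i, (A i).PosSemidef) (hB : ∀ i, (B i).PosSemidef)
    (hS : (∑ i, A i ⊗ₖ B i).IsHermitian) (hBs : (∑ i, B i).IsHermitian) :
    (⨅ j, ⨅ a, (hA j).1.eigenvalues a) * (⨅ b, hBs.eigenvalues b) ≤
      ⨅ c, hS.eigenvalues c := by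
  -- for `n = 0` or `k = 0` every infimum over an empty index type is the junk value `0`
  rcases isEmpty_or_nonempty (Fin n × Fin k) with hnk | hnk
  · obtain hn | hk := isEmpty_prod.mp hnk <;> simp [Real.iInf_of_isEmpty]
  set a := ⨅ j, ⨅ i, (hA j).1.eigenvalues i
  set b := ⨅ i, hBs.eigenvalues i
  have ha : 0 ≤ a :=
    Real.iInf_nonneg fun j => Real.iInf_nonneg (hA j).eigenvalues_nonneg
  have hA_ge (j) : a • 1 ≤ A j :=
    (hA j).1.smul_one_le_iff_le_eigenvalues.mpr fun i =>
      (ciInf_le (Finite.bddBelow_range _) j).trans (ciInf_le (Finite.bddBelow_range _) i)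
  have hBs_ge : b • 1 ≤ ∑ i, B i :=
    hBs.smul_one_le_iff_le_eigenvalues.mpr (ciInf_le (Finite.bddBelow_range _))
  have hS_ge := mul_smul_one_le_sum_kronecker Finset.univ ha (fun j _ => hA_ge j)
    (fun i _ => hB i) hBs_ge
  exact le_ciInf (hS.smul_one_le_iff_le_eigenvalues.mp hS_ge)
end

section
/- Let W ∈ ℝ^{k×m} and V ∈ ℝ^{m×d} with m ≥ max(d,k), and let Σ ∈ ℝ^{d×d} be symmetric positive definite with PSD square root Σ^{1/2}. Define Ĝ = (W Wᵀ) ⊗ Σ + I_k ⊗ (Σ^{1/2} Vᵀ V Σ^{1/2}). If σ_min(W)² + σ_min(V)² > 0, then the condition number satisfies κ(Ĝ) ≤ κ(Σ) · (σ_max(W)² + σ_max(V)²)/(σ_min(W)² + σ_min(V)²). -/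
open Matrix Kronecker
open scoped MatrixOrder

/-!
From the Loewner bounds `λ_min(Σ) I ≤ Σ ≤ λ_max(Σ) I`, `σ_min(W)² I ≤ W Wᵀ ≤ σ_max(W)² I` and,
after conjugating by `Σ^{1/2}`, `σ_min(V)² Σ ≤ Σ^{1/2} Vᵀ V Σ^{1/2} ≤ σ_max(V)² Σ`, monotonicity
of Kronecker products with positive semidefinite factors sandwiches `Ĝ` between
`λ_min(Σ) (σ_min(W)² + σ_min(V)²) I` and `λ_max(Σ) (σ_max(W)² + σ_max(V)²) I`; the ratio of these
scalars then bounds `κ(Ĝ)`.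
-/

namespace Matrix

variable {𝕜 : Type*} [RCLike 𝕜] {n : Type*} [Fintype n] [DecidableEq n]

theorem IsHermitian.le_smul_one_iff {A : Matrix n n 𝕜} (hA : A.IsHermitian) {c : ℝ} :
    A ≤ c • (1 : Matrix n n 𝕜) ↔ ∀ i, hA.eigenvalues i ≤ c := by
  rw [← Algebra.algebraMap_eq_smul_one, le_algebraMap_iff_spectrum_le hA.isSelfAdjoint,
    hA.spectrum_real_eq_range_eigenvalues, Set.forall_mem_range]

theorem IsHermitian.smul_one_le_iff {A : Matrix n n 𝕜} (hA : A.IsHermitian) {c : ℝ} :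
    c • (1 : Matrix n n 𝕜) ≤ A ↔ ∀ i, c ≤ hA.eigenvalues i := by
  rw [← Algebra.algebraMap_eq_smul_one, algebraMap_le_iff_le_spectrum hA.isSelfAdjoint,
    hA.spectrum_real_eq_range_eigenvalues, Set.forall_mem_range]

theorem IsHermitian.le_iSup_eigenvalues_smul_one {A : Matrix n n 𝕜} (hA : A.IsHermitian) :
    A ≤ (⨆ i, hA.eigenvalues i) • (1 : Matrix n n 𝕜) :=
  hA.le_smul_one_iff.mpr fun i => le_ciSup (Set.finite_range _).bddAbove i

theorem IsHermitian.iInf_eigenvalues_smul_one_le {A : Matrix n n 𝕜} (hA : A.IsHermitian) :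
    (⨅ i, hA.eigenvalues i) • (1 : Matrix n n 𝕜) ≤ A :=
  hA.smul_one_le_iff.mpr fun i => ciInf_le (Set.finite_range _).bddBelow i

theorem IsHermitian.iSup_div_iInf_eigenvalues_le {A : Matrix n n 𝕜} (hA : A.IsHermitian)
    {c C : ℝ} (hc : 0 < c) (hC : 0 ≤ C) (hcA : c • 1 ≤ A) (hAC : A ≤ C • 1) :
    (⨆ i, hA.eigenvalues i) / (⨅ i, hA.eigenvalues i) ≤ C / c := by
  cases isEmpty_or_nonempty n with
  | inl _ => simpa using div_nonneg hC hc.le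
  | inr _ =>
    have hsup : (⨆ i, hA.eigenvalues i) ≤ C := ciSup_le (hA.le_smul_one_iff.mp hAC)
    have hinf : c ≤ ⨅ i, hA.eigenvalues i := le_ciInf (hA.smul_one_le_iff.mp hcA)
    exact div_le_div₀ hC hsup hc hinf

variable {m p : Type*} [Fintype m] [Fintype p]

theorem kronecker_le_kronecker_of_nonneg_right {X Y : Matrix m m 𝕜} {Z : Matrix p p 𝕜}
    (hXY : X ≤ Y) (hZ : 0 ≤ Z) : X ⊗ₖ Z ≤ Y ⊗ₖ Z := by
  have hsplit : Y ⊗ₖ Z = X ⊗ₖ Z + (Y - X) ⊗ₖ Z := by rw [← add_kronecker, add_sub_cancel]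
  rw [hsplit]
  exact le_add_of_nonneg_right <| nonneg_iff_posSemidef.mpr <|
    (nonneg_iff_posSemidef.mp (sub_nonneg.mpr hXY)).kronecker (nonneg_iff_posSemidef.mp hZ)

theorem kronecker_le_kronecker_of_nonneg_left {X : Matrix m m 𝕜} {Y Z : Matrix p p 𝕜}
    (hYZ : Y ≤ Z) (hX : 0 ≤ X) : X ⊗ₖ Y ≤ X ⊗ₖ Z := by
  have hsplit : X ⊗ₖ Z = X ⊗ₖ Y + X ⊗ₖ (Z - Y) := by rw [← kronecker_add, add_sub_cancel]
  rw [hsplit]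
  exact le_add_of_nonneg_right <| nonneg_iff_posSemidef.mpr <|
    (nonneg_iff_posSemidef.mp hX).kronecker (nonneg_iff_posSemidef.mp (sub_nonneg.mpr hYZ))

variable [DecidableEq m] [DecidableEq p]

theorem smul_one_le_kronecker_add_one_kronecker {X : Matrix m m 𝕜} {Y Z : Matrix p p 𝕜}
    {a b c : ℝ} (hab : 0 ≤ a + b) (hX : a • 1 ≤ X) (hY : c • 1 ≤ Y) (hY0 : 0 ≤ Y)
    (hZ : b • Y ≤ Z) : (c * (a + b)) • (1 : Matrix (m × p) (m × p) 𝕜) ≤ X ⊗ₖ Y + 1 ⊗ₖ Z :=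
  calc (c * (a + b)) • (1 : Matrix (m × p) (m × p) 𝕜)
      = (a + b) • ((1 : Matrix m m 𝕜) ⊗ₖ (c • 1)) := by
        rw [kronecker_smul, one_kronecker_one, smul_smul, mul_comm]
    _ ≤ (a + b) • ((1 : Matrix m m 𝕜) ⊗ₖ Y) :=
        smul_le_smul_of_nonneg_left (kronecker_le_kronecker_of_nonneg_left hY zero_le_one) hab
    _ = (a • 1) ⊗ₖ Y + (1 : Matrix m m 𝕜) ⊗ₖ (b • Y) := by
        rw [smul_kronecker, kronecker_smul, add_smul]
    _ ≤ X ⊗ₖ Y + 1 ⊗ₖ Z := add_le_add (kronecker_le_kronecker_of_nonneg_right hX hY0)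
        (kronecker_le_kronecker_of_nonneg_left hZ zero_le_one)

theorem kronecker_add_one_kronecker_le_smul_one {X : Matrix m m 𝕜} {Y Z : Matrix p p 𝕜}
    {a b c : ℝ} (hab : 0 ≤ a + b) (hX : X ≤ a • 1) (hY : Y ≤ c • 1) (hY0 : 0 ≤ Y)
    (hZ : Z ≤ b • Y) : X ⊗ₖ Y + 1 ⊗ₖ Z ≤ (c * (a + b)) • (1 : Matrix (m × p) (m × p) 𝕜) :=
  calc X ⊗ₖ Y + 1 ⊗ₖ Z ≤ (a • 1) ⊗ₖ Y + (1 : Matrix m m 𝕜) ⊗ₖ (b • Y) :=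
        add_le_add (kronecker_le_kronecker_of_nonneg_right hX hY0)
          (kronecker_le_kronecker_of_nonneg_left hZ zero_le_one)
    _ = (a + b) • ((1 : Matrix m m 𝕜) ⊗ₖ Y) := by
        rw [smul_kronecker, kronecker_smul, add_smul]
    _ ≤ (a + b) • ((1 : Matrix m m 𝕜) ⊗ₖ (c • 1)) :=
        smul_le_smul_of_nonneg_left (kronecker_le_kronecker_of_nonneg_left hY zero_le_one) hab
    _ = (c * (a + b)) • (1 : Matrix (m × p) (m × p) 𝕜) := by
        rw [kronecker_smul, one_kronecker_one, smul_smul, mul_comm]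

end Matrix

theorem stmt_6_general {k m d : ℕ}
    (W : Matrix (Fin k) (Fin m) ℝ) (V : Matrix (Fin m) (Fin d) ℝ)
    (Sig R : Matrix (Fin d) (Fin d) ℝ) (hSig : Sig.PosDef) (hR : R.PosSemidef) (hRR : R * R = Sig)
    (hWW : (W * Wᵀ).IsHermitian) (hVV : (Vᵀ * V).IsHermitian)
    (hG : ((W * Wᵀ) ⊗ₖ Sig + (1 : Matrix (Fin k) (Fin k) ℝ) ⊗ₖ (R * (Vᵀ * V) * R)).IsHermitian)
    (hpos : 0 < (⨅ i, hWW.eigenvalues i) + (⨅ i, hVV.eigenvalues i)) :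
    (⨆ i, hG.eigenvalues i) / (⨅ i, hG.eigenvalues i) ≤
      ((⨆ i, hSig.1.eigenvalues i) / (⨅ i, hSig.1.eigenvalues i)) *
        (((⨆ i, hWW.eigenvalues i) + (⨆ i, hVV.eigenvalues i)) /
          ((⨅ i, hWW.eigenvalues i) + (⨅ i, hVV.eigenvalues i))) := by
  -- for `d = 0` both sides are `0`, since `⨆` and `⨅` over an empty type are `0` in `ℝ`
  rcases isEmpty_or_nonempty (Fin d) with _ | _
  · simp
  set A := ⨆ i, hWW.eigenvalues i
  set b := ⨅ i, hVV.eigenvalues i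
  set B := ⨆ i, hVV.eigenvalues i
  set s := ⨅ i, hSig.1.eigenvalues i
  set S := ⨆ i, hSig.1.eigenvalues i
  have hSig0 : 0 ≤ Sig := nonneg_iff_posSemidef.mpr hSig.posSemidef
  have hs : 0 < s := by
    obtain ⟨i, hi⟩ := exists_eq_ciInf_of_finite (f := hSig.1.eigenvalues)
    exact (hSig.eigenvalues_pos i).trans_eq hi
  have hA : 0 ≤ A :=
    Real.iSup_nonneg fun i => (posSemidef_self_mul_conjTranspose W).eigenvalues_nonneg i
  have hB : 0 ≤ B :=
    Real.iSup_nonneg fun i => (posSemidef_conjTranspose_mul_self V).eigenvalues_nonneg i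
  have hS : 0 ≤ S := Real.iSup_nonneg fun i => (hSig.eigenvalues_pos i).le
  have hVR_lo : b • Sig ≤ R * (Vᵀ * V) * R := by
    simpa [← hRR] using hR.isHermitian.isSelfAdjoint.conjugate_le_conjugate
      hVV.iInf_eigenvalues_smul_one_le
  have hVR_hi : R * (Vᵀ * V) * R ≤ B • Sig := by
    simpa [← hRR] using hR.isHermitian.isSelfAdjoint.conjugate_le_conjugate
      hVV.le_iSup_eigenvalues_smul_one
  rw [div_mul_div_comm]
  refine hG.iSup_div_iInf_eigenvalues_le (mul_pos hs hpos) (mul_nonneg hS (add_nonneg hA hB))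
    ?_ ?_
  · exact smul_one_le_kronecker_add_one_kronecker hpos.le hWW.iInf_eigenvalues_smul_one_le
      hSig.1.iInf_eigenvalues_smul_one_le hSig0 hVR_lo
  · exact kronecker_add_one_kronecker_le_smul_one (add_nonneg hA hB)
      hWW.le_iSup_eigenvalues_smul_one hSig.1.le_iSup_eigenvalues_smul_one hSig0 hVR_hi

/-- Condition number bound for the Gauss–Newton matrix of a one-hidden-layer linear
network `F(x) = W V x` with input covariance `Σ = R * R` (`R = Σ^{1/2}` PSD).
Here `σ_max(W)² = λ_max(W Wᵀ)`, `σ_min(W)² = λ_min(W Wᵀ)` (valid since `k ≤ m`),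
and similarly for `V` via `Vᵀ V` (valid since `d ≤ m`). -/
theorem stmt_6 {k m d : ℕ} (hdm : d ≤ m) (hkm : k ≤ m)
    (W : Matrix (Fin k) (Fin m) ℝ) (V : Matrix (Fin m) (Fin d) ℝ)
    (Sig R : Matrix (Fin d) (Fin d) ℝ) (hSig : Sig.PosDef) (hR : R.PosSemidef) (hRR : R * R = Sig)
    (hWW : (W * Wᵀ).IsHermitian) (hVV : (Vᵀ * V).IsHermitian)
    (hG : ((W * Wᵀ) ⊗ₖ Sig + (1 : Matrix (Fin k) (Fin k) ℝ) ⊗ₖ (R * (Vᵀ * V) * R)).IsHermitian)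
    (hpos : 0 < (⨅ i, hWW.eigenvalues i) + (⨅ i, hVV.eigenvalues i)) :
    (⨆ i, hG.eigenvalues i) / (⨅ i, hG.eigenvalues i) ≤
      ((⨆ i, hSig.1.eigenvalues i) / (⨅ i, hSig.1.eigenvalues i)) *
        (((⨆ i, hWW.eigenvalues i) + (⨆ i, hVV.eigenvalues i)) /
          ((⨅ i, hWW.eigenvalues i) + (⨅ i, hVV.eigenvalues i))) :=
  stmt_6_general W V Sig R hSig hR hRR hWW hVV hG hpos
end

section
/- Let A₁,…,A_L be k×k symmetric PSD matrices and B₁,…,B_L be d×d symmetric PSD matrices, and suppose λ_min(A_ℓ)·λ_min(B_ℓ) > 0 for all ℓ. Then κ(∑_{ℓ=1}^L A_ℓ ⊗ B_ℓ) ≤ ∑_{ℓ=1}^L γ_ℓ · κ(A_ℓ)·κ(B_ℓ), where γ_ℓ = λ_min(A_ℓ)λ_min(B_ℓ) / ∑_{i=1}^L λ_min(A_i)λ_min(B_i) and κ(M) = λ_max(M)/λ_min(M). -/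
/-!
Write `a_ℓ, α_ℓ` for the extreme eigenvalues of `A_ℓ` and `b_ℓ, β_ℓ` for those of `B_ℓ`, so that
`a_ℓ • 1 ≤ A_ℓ ≤ α_ℓ • 1` and `b_ℓ • 1 ≤ B_ℓ ≤ β_ℓ • 1` in the Loewner order. Since Kronecker
products of positive semidefinite matrices are positive semidefinite, these bounds multiply:
`(a_ℓ b_ℓ) • 1 ≤ A_ℓ ⊗ B_ℓ ≤ (α_ℓ β_ℓ) • 1`. Summing over `ℓ` traps the spectrum of `∑ A_ℓ ⊗ B_ℓ`
in `[∑ a_ℓ b_ℓ, ∑ α_ℓ β_ℓ]`, and `(∑ α_ℓ β_ℓ) / (∑ a_ℓ b_ℓ)` is exactly the `γ`-weighted sum of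
`κ(A_ℓ) κ(B_ℓ) = (α_ℓ β_ℓ) / (a_ℓ b_ℓ)`.
-/

open Matrix Kronecker
open scoped ComplexOrder MatrixOrder

namespace Matrix

theorem sub_kronecker {l m n p α : Type*} [NonUnitalNonAssocRing α] (A A' : Matrix l m α)
    (B : Matrix n p α) : (A - A') ⊗ₖ B = A ⊗ₖ B - A' ⊗ₖ B := by
  ext; simp [sub_mul]

theorem kronecker_sub {l m n p α : Type*} [NonUnitalNonAssocRing α] (A : Matrix l m α)
    (B B' : Matrix n p α) : A ⊗ₖ (B - B') = A ⊗ₖ B - A ⊗ₖ B' := by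
  ext; simp [mul_sub]

variable {m n 𝕜 : Type*} [DecidableEq m] [DecidableEq n] [RCLike 𝕜]

theorem smul_one_kronecker_smul_one (a b : ℝ) :
    (a • 1 : Matrix m m 𝕜) ⊗ₖ (b • 1 : Matrix n n 𝕜) = (a * b) • 1 := by
  rw [smul_kronecker, kronecker_smul, one_kronecker_one, smul_smul]

variable [Fintype m] [Fintype n]

theorem kronecker_le_smul_one {A : Matrix m m 𝕜} {B : Matrix n n 𝕜} {α β : ℝ}
    (hA : 0 ≤ A) (hB : 0 ≤ B) (hAα : A ≤ α • 1) (hBβ : B ≤ β • 1) :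
    A ⊗ₖ B ≤ (α * β) • 1 := by
  have hdecomp : (α * β) • 1 - A ⊗ₖ B =
      (α • 1 - A) ⊗ₖ (β • 1 : Matrix n n 𝕜) + A ⊗ₖ (β • 1 - B) := by
    rw [sub_kronecker, kronecker_sub, smul_one_kronecker_smul_one]
    abel
  rw [le_iff, hdecomp]
  exact ((le_iff.mp hAα).kronecker (hB.trans hBβ).posSemidef).add
    (hA.posSemidef.kronecker (le_iff.mp hBβ))

theorem smul_one_le_kronecker {A : Matrix m m 𝕜} {B : Matrix n n 𝕜} {a b : ℝ}
    (hB : 0 ≤ B) (ha : 0 ≤ a) (haA : a • 1 ≤ A) (hbB : b • 1 ≤ B) :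
    (a * b) • 1 ≤ A ⊗ₖ B := by
  have hdecomp : A ⊗ₖ B - (a * b) • 1 =
      (A - a • 1) ⊗ₖ B + (a • 1 : Matrix m m 𝕜) ⊗ₖ (B - b • 1) := by
    rw [sub_kronecker, kronecker_sub, smul_one_kronecker_smul_one]
    abel
  have ha1 : (0 : Matrix m m 𝕜) ≤ a • 1 := smul_nonneg ha zero_le_one
  rw [le_iff, hdecomp]
  exact ((le_iff.mp haA).kronecker hB.posSemidef).add (ha1.posSemidef.kronecker (le_iff.mp hbB))

namespace IsHermitian

variable {M : Matrix n n 𝕜} (hM : M.IsHermitian)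
include hM

theorem le_smul_one_iff_s9 {c : ℝ} : M ≤ c • 1 ↔ ∀ i, hM.eigenvalues i ≤ c := by
  rw [← Algebra.algebraMap_eq_smul_one, le_algebraMap_iff_spectrum_le hM.isSelfAdjoint,
    hM.spectrum_real_eq_range_eigenvalues, Set.forall_mem_range]

theorem smul_one_le_iff_s9 {c : ℝ} : c • 1 ≤ M ↔ ∀ i, c ≤ hM.eigenvalues i := by
  rw [← Algebra.algebraMap_eq_smul_one, algebraMap_le_iff_le_spectrum hM.isSelfAdjoint,
    hM.spectrum_real_eq_range_eigenvalues, Set.forall_mem_range]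

theorem le_iSup_eigenvalues_smul_one_s9 : M ≤ (⨆ i, hM.eigenvalues i) • 1 :=
  hM.le_smul_one_iff_s9.mpr fun i => le_ciSup (Finite.bddAbove_range _) i

theorem iInf_eigenvalues_smul_one_le_s9 : (⨅ i, hM.eigenvalues i) • 1 ≤ M :=
  hM.smul_one_le_iff_s9.mpr fun i => ciInf_le (Finite.bddBelow_range _) i

theorem iSup_eigenvalues_le [Nonempty n] {c : ℝ} (h : M ≤ c • 1) : ⨆ i, hM.eigenvalues i ≤ c :=
  ciSup_le (hM.le_smul_one_iff_s9.mp h)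

theorem le_iInf_eigenvalues [Nonempty n] {c : ℝ} (h : c • 1 ≤ M) : c ≤ ⨅ i, hM.eigenvalues i :=
  le_ciInf (hM.smul_one_le_iff_s9.mp h)

end IsHermitian

variable [Nonempty m] [Nonempty n] {ι : Type*} [Fintype ι]
  {A : ι → Matrix m m 𝕜} {B : ι → Matrix n n 𝕜}
  (hA : ∀ ℓ, (A ℓ).PosSemidef) (hB : ∀ ℓ, (B ℓ).PosSemidef)
  (hS : (∑ ℓ, A ℓ ⊗ₖ B ℓ).IsHermitian)
include hA hB

theorem iSup_eigenvalues_sum_kronecker_le :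
    ⨆ i, hS.eigenvalues i ≤
      ∑ ℓ, (⨆ i, (hA ℓ).1.eigenvalues i) * (⨆ i, (hB ℓ).1.eigenvalues i) := by
  refine hS.iSup_eigenvalues_le ?_
  rw [Finset.sum_smul]
  exact Finset.sum_le_sum fun ℓ _ => kronecker_le_smul_one (hA ℓ).nonneg (hB ℓ).nonneg
    (hA ℓ).1.le_iSup_eigenvalues_smul_one_s9 (hB ℓ).1.le_iSup_eigenvalues_smul_one_s9

theorem sum_iInf_eigenvalues_le_iInf_eigenvalues_sum_kronecker :
    ∑ ℓ, (⨅ i, (hA ℓ).1.eigenvalues i) * (⨅ i, (hB ℓ).1.eigenvalues i) ≤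
      ⨅ i, hS.eigenvalues i := by
  refine hS.le_iInf_eigenvalues ?_
  rw [Finset.sum_smul]
  exact Finset.sum_le_sum fun ℓ _ => smul_one_le_kronecker (hB ℓ).nonneg
    (Real.iInf_nonneg (hA ℓ).eigenvalues_nonneg)
    (hA ℓ).1.iInf_eigenvalues_smul_one_le_s9 (hB ℓ).1.iInf_eigenvalues_smul_one_le_s9

end Matrix

/-- Convex-combination condition number bound for a sum of Kronecker products of PSD
matrices (the abstract core of the L-layer Gauss–Newton bound):
`κ(∑ Aℓ ⊗ Bℓ) ≤ ∑ γℓ κ(Aℓ) κ(Bℓ)` with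
`γℓ = λmin(Aℓ)λmin(Bℓ) / ∑ᵢ λmin(Aᵢ)λmin(Bᵢ)`. -/
theorem stmt_9 {L k d : ℕ} (A : Fin L → Matrix (Fin k) (Fin k) ℝ)
    (B : Fin L → Matrix (Fin d) (Fin d) ℝ)
    (hA : ∀ ℓ, (A ℓ).PosSemidef) (hB : ∀ ℓ, (B ℓ).PosSemidef)
    (hS : (∑ ℓ, A ℓ ⊗ₖ B ℓ).IsHermitian)
    (hpos : ∀ ℓ, 0 < (⨅ i, (hA ℓ).1.eigenvalues i) * (⨅ i, (hB ℓ).1.eigenvalues i)) :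
    (⨆ i, hS.eigenvalues i) / (⨅ i, hS.eigenvalues i) ≤
      ∑ ℓ, ((⨅ i, (hA ℓ).1.eigenvalues i) * (⨅ i, (hB ℓ).1.eigenvalues i) /
            ∑ j, (⨅ i, (hA j).1.eigenvalues i) * (⨅ i, (hB j).1.eigenvalues i)) *
          (((⨆ i, (hA ℓ).1.eigenvalues i) / (⨅ i, (hA ℓ).1.eigenvalues i)) *
           ((⨆ i, (hB ℓ).1.eigenvalues i) / (⨅ i, (hB ℓ).1.eigenvalues i))) := by
  rcases isEmpty_or_nonempty (Fin L) with hL | hL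
  · have hzero : hS.eigenvalues = 0 := hS.eigenvalues_eq_zero_iff.mpr (by simp)
    rw [hzero]
    simp
  -- `⨅` over an empty index set is `0` in `ℝ`, so `hpos` rules out `k = 0` and `d = 0`.
  have : Nonempty (Fin k) := by by_contra! h; simpa using hpos hL.some
  have : Nonempty (Fin d) := by by_contra! h; simpa using hpos hL.some
  calc (⨆ i, hS.eigenvalues i) / (⨅ i, hS.eigenvalues i)
      ≤ (∑ ℓ, (⨆ i, (hA ℓ).1.eigenvalues i) * (⨆ i, (hB ℓ).1.eigenvalues i)) /
          ∑ ℓ, (⨅ i, (hA ℓ).1.eigenvalues i) * (⨅ i, (hB ℓ).1.eigenvalues i) :=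
        div_le_div₀ (Finset.sum_nonneg fun ℓ _ =>
            mul_nonneg (Real.iSup_nonneg (hA ℓ).eigenvalues_nonneg)
              (Real.iSup_nonneg (hB ℓ).eigenvalues_nonneg))
          (iSup_eigenvalues_sum_kronecker_le hA hB hS)
          (Finset.sum_pos (fun ℓ _ => hpos ℓ) Finset.univ_nonempty)
          (sum_iInf_eigenvalues_le_iInf_eigenvalues_sum_kronecker hA hB hS)
    _ = _ := by
      rw [Finset.sum_div]
      refine Finset.sum_congr rfl fun ℓ _ => ?_
      have ha := left_ne_zero_of_mul (hpos ℓ).ne'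
      have hb := right_ne_zero_of_mul (hpos ℓ).ne'
      field_simp
end
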